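/- Let 0 < ε ≤ 1/2, let X ∈ ℝ^{n×d} have full column rank d, let Y ∈ ℝⁿ, and let Π ∈ ℝ^{k×n} be an (ε/3)-subspace embedding for the column space of the augmented matrix [X,Y]. Let γ be a minimizer of β ↦ ‖Xβ − Y‖² and ν a minimizer of β ↦ ‖Π(Xβ − Y)‖². Suppose ‖Xγ‖ ≥ ρ‖Y‖ for some ρ ∈ (0,1]. Then (‖ν‖² + trace((XᵀΠᵀΠX)⁻¹))^{1/2} ≤ (1 + (κ(X)/ρ)·ε) · (‖γ‖² + trace((XᵀX)⁻¹))^{1/2}, where κ(X) = σ_max(X)/σ_min(X). Equivalently, the ℓ₂ Wasserstein weight of the Gaussian measure N(ν, (XᵀΠᵀΠX)⁻¹) is at most (1 + (κ(X)/ρ)·ε) times that of N(γ, (XᵀX)⁻¹). -/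

import Mathlib

open Matrix

noncomputable section

/-- Squared Euclidean norm of a vector. -/
def sqNorm {ι : Type*} [Fintype ι] (v : ι → ℝ) : ℝ := ∑ i, (v i) ^ 2

/-- Euclidean norm of a vector. -/
def eNorm {ι : Type*} [Fintype ι] (v : ι → ℝ) : ℝ := Real.sqrt (sqNorm v)

/-- `P` is an `ε`-subspace embedding for the column space of `A`:
for all `x`, `(1-ε)‖Ax‖² ≤ ‖PAx‖² ≤ (1+ε)‖Ax‖²`. -/
def IsSubspaceEmbedding {K N C : Type*} [Fintype K] [Fintype N] [Fintype C]
    (P : Matrix K N ℝ) (A : Matrix N C ℝ) (ε : ℝ) : Prop :=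
  ∀ x : C → ℝ,
    (1 - ε) * sqNorm (A.mulVec x) ≤ sqNorm ((P * A).mulVec x) ∧
      sqNorm ((P * A).mulVec x) ≤ (1 + ε) * sqNorm (A.mulVec x)

/-- The augmented matrix `[X, Y]` obtained by appending the column `Y` to `X`. -/
def augment {n d : ℕ} (X : Matrix (Fin n) (Fin d) ℝ) (Y : Fin n → ℝ) :
    Matrix (Fin n) (Fin (d + 1)) ℝ :=
  Matrix.of fun i => Fin.snoc (X i) (Y i)

/-- The squared smallest singular value of `M`: `σ_min(M)² = inf_{‖x‖ = 1} ‖Mx‖²`. -/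
def sigMinSq {N C : Type*} [Fintype N] [Fintype C] (M : Matrix N C ℝ) : ℝ :=
  sInf {r : ℝ | ∃ x : C → ℝ, sqNorm x = 1 ∧ r = sqNorm (M.mulVec x)}

/-- The squared largest singular value of `M`: `σ_max(M)² = sup_{‖x‖ = 1} ‖Mx‖²`. -/
def sigMaxSq {N C : Type*} [Fintype N] [Fintype C] (M : Matrix N C ℝ) : ℝ :=
  sSup {r : ℝ | ∃ x : C → ℝ, sqNorm x = 1 ∧ r = sqNorm (M.mulVec x)}

/-- The condition number `κ(M) = σ_max(M) / σ_min(M)`. -/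
def condNum {N C : Type*} [Fintype N] [Fintype C] (M : Matrix N C ℝ) : ℝ :=
  Real.sqrt (sigMaxSq M) / Real.sqrt (sigMinSq M)

/-!
Write `e = ν - γ` and `r = Y - Xγ`. Both `Xe` and `r` lie in the column space of `[X, Y]`; the
normal equations give `Xe ⊥ r`, and the sketched normal equations give `‖ΠXe‖² = ⟨ΠXe, Πr⟩`.
Polarizing the embedding inequality bounds `⟨ΠXe, Πr⟩` by `⟨Xe, r⟩ + (ε/3)‖Xe‖‖r‖ = (ε/3)‖Xe‖‖r‖`,
so `(1 - ε/3)‖Xe‖ ≤ (ε/3)‖r‖ ≤ (ε/3)‖Y‖ ≤ (ε/3)‖Xγ‖/ρ`; comparing `‖Xe‖` and `‖Xγ‖` with `‖e‖`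
and `‖γ‖` through `σ_min` and `σ_max` gives `‖ν‖ ≤ (1 + κε/ρ)‖γ‖`.

For the covariances, `‖ΠXu‖² ≥ (1 - ε/3)‖Xu‖²` says `XᵀΠᵀΠX ≥ (1 - ε/3) XᵀX` in the Loewner order,
which inversion reverses, so `trace (XᵀΠᵀΠX)⁻¹ ≤ (1 - ε/3)⁻¹ trace (XᵀX)⁻¹` and
`(1 - ε/3)⁻¹ ≤ (1 + κε/ρ)²`.
-/

section EuclideanNorm

variable {ι : Type*} [Fintype ι]

lemma sqNorm_eq_dotProduct (v : ι → ℝ) : sqNorm v = v ⬝ᵥ v := by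
  simp only [sqNorm, dotProduct, sq]

lemma sqNorm_nonneg (v : ι → ℝ) : 0 ≤ sqNorm v :=
  Finset.sum_nonneg fun _ _ => sq_nonneg _

lemma sqNorm_eq_zero_iff {v : ι → ℝ} : sqNorm v = 0 ↔ v = 0 := by
  rw [sqNorm_eq_dotProduct, dotProduct_self_eq_zero]

lemma sqNorm_add (u v : ι → ℝ) : sqNorm (u + v) = sqNorm u + 2 * (u ⬝ᵥ v) + sqNorm v := by
  simp only [sqNorm_eq_dotProduct, add_dotProduct, dotProduct_add, dotProduct_comm v u]
  ring

lemma sqNorm_sub (u v : ι → ℝ) : sqNorm (u - v) = sqNorm u - 2 * (u ⬝ᵥ v) + sqNorm v := by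
  simp only [sqNorm_eq_dotProduct, sub_dotProduct, dotProduct_sub, dotProduct_comm v u]
  ring

lemma sqNorm_smul (c : ℝ) (v : ι → ℝ) : sqNorm (c • v) = c ^ 2 * sqNorm v := by
  simp only [sqNorm_eq_dotProduct, smul_dotProduct, dotProduct_smul, smul_eq_mul]
  ring

lemma eNorm_eq_norm (v : ι → ℝ) : eNorm v = ‖WithLp.toLp 2 v‖ := by
  simp [eNorm, sqNorm, EuclideanSpace.norm_eq]

lemma eNorm_nonneg (v : ι → ℝ) : 0 ≤ eNorm v :=
  Real.sqrt_nonneg _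

lemma eNorm_pos {v : ι → ℝ} (hv : v ≠ 0) : 0 < eNorm v := by
  rw [eNorm_eq_norm, norm_pos_iff]
  simpa using hv

lemma eNorm_sq (v : ι → ℝ) : eNorm v ^ 2 = sqNorm v :=
  Real.sq_sqrt (sqNorm_nonneg v)

lemma eNorm_add_le (u v : ι → ℝ) : eNorm (u + v) ≤ eNorm u + eNorm v := by
  simpa only [eNorm_eq_norm, WithLp.toLp_add] using norm_add_le _ _

end EuclideanNorm

section LeastSquares

variable {ι κ : Type*} [Fintype ι] [Fintype κ]

def IsLeastSquaresSolution (A : Matrix ι κ ℝ) (Y : ι → ℝ) (g : κ → ℝ) : Prop :=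
  ∀ β : κ → ℝ, sqNorm (A *ᵥ g - Y) ≤ sqNorm (A *ᵥ β - Y)

lemma IsLeastSquaresSolution.mulVec_dotProduct_residual {A : Matrix ι κ ℝ} {Y : ι → ℝ}
    {g : κ → ℝ} (hg : IsLeastSquaresSolution A Y g) (v : κ → ℝ) :
    (A *ᵥ v) ⬝ᵥ (A *ᵥ g - Y) = 0 := by
  have hquad : ∀ t : ℝ,
      0 ≤ sqNorm (A *ᵥ v) * (t * t) + 2 * ((A *ᵥ v) ⬝ᵥ (A *ᵥ g - Y)) * t + 0 := by
    intro t
    have h := hg (g + t • v)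
    rw [mulVec_add, mulVec_smul, add_sub_right_comm, sqNorm_add, sqNorm_smul,
      dotProduct_smul, smul_eq_mul, dotProduct_comm] at h
    linarith
  have := discrim_le_zero hquad
  rw [discrim] at this
  nlinarith [sq_nonneg ((A *ᵥ v) ⬝ᵥ (A *ᵥ g - Y))]

lemma IsLeastSquaresSolution.sqNorm_eq_add {A : Matrix ι κ ℝ} {Y : ι → ℝ} {g : κ → ℝ}
    (hg : IsLeastSquaresSolution A Y g) :
    sqNorm Y = sqNorm (A *ᵥ g) + sqNorm (Y - A *ᵥ g) := by
  have h := hg.mulVec_dotProduct_residual g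
  rw [← neg_sub, dotProduct_neg, neg_eq_zero] at h
  calc sqNorm Y = sqNorm (A *ᵥ g + (Y - A *ᵥ g)) := by rw [add_sub_cancel]
    _ = sqNorm (A *ᵥ g) + sqNorm (Y - A *ᵥ g) := by rw [sqNorm_add, h, mul_zero, add_zero]

end LeastSquares

section SubspaceEmbedding

variable {K N C : Type*} [Fintype K] [Fintype N] [Fintype C] {P : Matrix K N ℝ}
  {A : Matrix N C ℝ} {ε : ℝ}

lemma IsSubspaceEmbedding.two_mul_dotProduct_le (hP : IsSubspaceEmbedding P A ε)
    (x y : C → ℝ) :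
    2 * ((P *ᵥ (A *ᵥ x)) ⬝ᵥ (P *ᵥ (A *ᵥ y))) ≤
      2 * ((A *ᵥ x) ⬝ᵥ (A *ᵥ y)) + ε * (sqNorm (A *ᵥ x) + sqNorm (A *ᵥ y)) := by
  have hadd := (hP (x + y)).2
  have hsub := (hP (x - y)).1
  simp only [← mulVec_mulVec, mulVec_add, mulVec_sub, sqNorm_add, sqNorm_sub] at hadd hsub
  linarith

lemma IsSubspaceEmbedding.dotProduct_le (hP : IsSubspaceEmbedding P A ε) (x y : C → ℝ) :
    (P *ᵥ (A *ᵥ x)) ⬝ᵥ (P *ᵥ (A *ᵥ y)) ≤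
      (A *ᵥ x) ⬝ᵥ (A *ᵥ y) + ε * (eNorm (A *ᵥ x) * eNorm (A *ᵥ y)) := by
  by_cases hx : A *ᵥ x = 0
  · simp [hx, eNorm, sqNorm]
  by_cases hy : A *ᵥ y = 0
  · simp [hy, eNorm, sqNorm]
  set a := eNorm (A *ᵥ x)
  set b := eNorm (A *ᵥ y)
  have hab : 0 < 2 * (a * b) := by have := eNorm_pos hx; have := eNorm_pos hy; positivity
  -- rescaling `x` and `y` to equal norms makes the AM-GM step of the polarization sharp
  have h := hP.two_mul_dotProduct_le (b • x) (a • y)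
  simp only [mulVec_smul, smul_dotProduct, dotProduct_smul, smul_eq_mul, sqNorm_smul] at h
  rw [← eNorm_sq, ← eNorm_sq] at h
  refine le_of_mul_le_mul_left ?_ hab
  linarith

end SubspaceEmbedding

lemma augment_mulVec_snoc {n d : ℕ} (X : Matrix (Fin n) (Fin d) ℝ) (Y : Fin n → ℝ)
    (β : Fin d → ℝ) (t : ℝ) : augment X Y *ᵥ Fin.snoc β t = X *ᵥ β + t • Y := by
  ext i
  simp [augment, mulVec, dotProduct, Fin.sum_univ_castSucc, mul_comm]

theorem IsSubspaceEmbedding.mul_eNorm_mulVec_sub_le {n d k : ℕ} {ε : ℝ}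
    {X : Matrix (Fin n) (Fin d) ℝ} {Y : Fin n → ℝ} {P : Matrix (Fin k) (Fin n) ℝ}
    {γ ν : Fin d → ℝ} (hε : 0 ≤ ε) (hP : IsSubspaceEmbedding P (augment X Y) ε)
    (hγ : IsLeastSquaresSolution X Y γ) (hν : IsLeastSquaresSolution (P * X) (P *ᵥ Y) ν) :
    (1 - ε) * eNorm (X *ᵥ (ν - γ)) ≤ ε * eNorm (Y - X *ᵥ γ) := by
  set u := X *ᵥ (ν - γ)
  set r := Y - X *ᵥ γ
  have hu : augment X Y *ᵥ Fin.snoc (ν - γ) 0 = u := by simp [augment_mulVec_snoc, u]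
  have hr : augment X Y *ᵥ Fin.snoc (-γ) 1 = r := by
    rw [augment_mulVec_snoc, mulVec_neg, one_smul, neg_add_eq_sub]
  have horth : u ⬝ᵥ r = 0 := by
    rw [show r = -(X *ᵥ γ - Y) from (neg_sub _ _).symm, dotProduct_neg,
      hγ.mulVec_dotProduct_residual, neg_zero]
  have hsketch : sqNorm (P *ᵥ u) = (P *ᵥ u) ⬝ᵥ (P *ᵥ r) := by
    have h := hν.mulVec_dotProduct_residual (ν - γ)
    have hres : (P * X) *ᵥ ν - P *ᵥ Y = P *ᵥ u - P *ᵥ r := by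
      simp only [u, r, ← mulVec_mulVec, mulVec_sub]
      abel
    rw [hres, ← mulVec_mulVec, dotProduct_sub, sub_eq_zero] at h
    rw [sqNorm_eq_dotProduct, h]
  have hlow : (1 - ε) * eNorm u ^ 2 ≤ sqNorm (P *ᵥ u) := by
    simpa only [← mulVec_mulVec, hu, eNorm_sq] using (hP (Fin.snoc (ν - γ) 0)).1
  have hup : (P *ᵥ u) ⬝ᵥ (P *ᵥ r) ≤ ε * (eNorm u * eNorm r) := by
    simpa only [hu, hr, horth, zero_add] using
      hP.dotProduct_le (Fin.snoc (ν - γ) 0) (Fin.snoc (-γ) 1)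
  rcases (eNorm_nonneg u).eq_or_lt with hu0 | hupos
  · rw [← hu0, mul_zero]
    exact mul_nonneg hε (eNorm_nonneg r)
  · refine le_of_mul_le_mul_right ?_ hupos
    nlinarith

section SingularValues

variable {N C : Type*} [Fintype N] [Fintype C] (M : Matrix N C ℝ)

def rayleighValues : Set ℝ := {r : ℝ | ∃ x : C → ℝ, sqNorm x = 1 ∧ r = sqNorm (M *ᵥ x)}

lemma sqNorm_mulVec_le_sum_sq_mul (v : C → ℝ) :
    sqNorm (M *ᵥ v) ≤ (∑ i, ∑ j, M i j ^ 2) * sqNorm v := by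
  rw [Finset.sum_mul]
  refine Finset.sum_le_sum fun i _ => ?_
  simpa [mulVec, dotProduct, sqNorm] using Finset.sum_mul_sq_le_sq_mul_sq Finset.univ (M i) v

lemma sqNorm_mulVec_div_mem_rayleighValues {v : C → ℝ} (hv : v ≠ 0) :
    sqNorm (M *ᵥ v) / sqNorm v ∈ rayleighValues M := by
  have hpos : 0 < sqNorm v := by rw [← eNorm_sq]; exact pow_pos (eNorm_pos hv) 2
  refine ⟨(eNorm v)⁻¹ • v, ?_, ?_⟩
  · rw [sqNorm_smul, inv_pow, eNorm_sq, inv_mul_cancel₀ hpos.ne']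
  · rw [mulVec_smul, sqNorm_smul, inv_pow, eNorm_sq, inv_mul_eq_div]

lemma rayleighValues_nonempty [Nonempty C] : (rayleighValues M).Nonempty :=
  ⟨_, sqNorm_mulVec_div_mem_rayleighValues M one_ne_zero⟩

lemma rayleighValues_bddBelow : BddBelow (rayleighValues M) := by
  refine ⟨0, ?_⟩
  rintro _ ⟨x, -, rfl⟩
  exact sqNorm_nonneg _

lemma rayleighValues_bddAbove : BddAbove (rayleighValues M) := by
  refine ⟨∑ i, ∑ j, M i j ^ 2, ?_⟩
  rintro _ ⟨x, hx, rfl⟩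
  simpa [hx] using sqNorm_mulVec_le_sum_sq_mul M x

lemma sigMinSq_mul_sqNorm_le (v : C → ℝ) : sigMinSq M * sqNorm v ≤ sqNorm (M *ᵥ v) := by
  rcases eq_or_ne v 0 with rfl | hv
  · simp [sqNorm]
  have hpos : 0 < sqNorm v := by rw [← eNorm_sq]; exact pow_pos (eNorm_pos hv) 2
  rw [← le_div_iff₀ hpos]
  exact csInf_le (rayleighValues_bddBelow M) (sqNorm_mulVec_div_mem_rayleighValues M hv)

lemma sqNorm_mulVec_le_sigMaxSq_mul (v : C → ℝ) : sqNorm (M *ᵥ v) ≤ sigMaxSq M * sqNorm v := by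
  rcases eq_or_ne v 0 with rfl | hv
  · simp [sqNorm]
  have hpos : 0 < sqNorm v := by rw [← eNorm_sq]; exact pow_pos (eNorm_pos hv) 2
  rw [← div_le_iff₀ hpos]
  exact le_csSup (rayleighValues_bddAbove M) (sqNorm_mulVec_div_mem_rayleighValues M hv)

lemma exists_pos_mul_eNorm_le_eNorm_mulVec (hM : Function.Injective M.mulVec) :
    ∃ c > 0, ∀ v, c * eNorm v ≤ eNorm (M *ᵥ v) := by
  classical
  let f := Matrix.toLpLin 2 2 M
  have hf : LinearMap.ker f = ⊥ := LinearMap.ker_eq_bot.2 fun x y hxy =>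
    WithLp.ofLp_injective 2 (hM (WithLp.toLp_injective 2 hxy))
  obtain ⟨K, -, hK⟩ := f.exists_antilipschitzWith hf
  obtain ⟨c, hc, h⟩ := antilipschitzWith_iff_exists_mul_le_norm.1 ⟨K, hK⟩
  refine ⟨c, hc, fun v => ?_⟩
  rw [eNorm_eq_norm, eNorm_eq_norm]
  exact h (WithLp.toLp 2 v)

lemma sigMinSq_pos [Nonempty C] (hM : Function.Injective M.mulVec) : 0 < sigMinSq M := by
  obtain ⟨c, hc, h⟩ := exists_pos_mul_eNorm_le_eNorm_mulVec M hM
  refine (pow_pos hc 2).trans_le (le_csInf (rayleighValues_nonempty M) ?_)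
  rintro _ ⟨x, hx, rfl⟩
  have hx1 : eNorm x = 1 := by rw [eNorm, hx, Real.sqrt_one]
  rw [← eNorm_sq]
  have := h x
  rw [hx1, mul_one] at this
  exact pow_le_pow_left₀ hc.le this 2

lemma one_le_condNum [Nonempty C] (hM : Function.Injective M.mulVec) : 1 ≤ condNum M := by
  rw [condNum, one_le_div (Real.sqrt_pos.2 (sigMinSq_pos M hM))]
  exact Real.sqrt_le_sqrt (csInf_le_csSup (rayleighValues_nonempty M)
    (rayleighValues_bddBelow M) (rayleighValues_bddAbove M))

lemma sqrt_sigMinSq_mul_eNorm_le (v : C → ℝ) :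
    Real.sqrt (sigMinSq M) * eNorm v ≤ eNorm (M *ᵥ v) := by
  rw [eNorm, eNorm, ← Real.sqrt_mul' _ (sqNorm_nonneg v)]
  exact Real.sqrt_le_sqrt (sigMinSq_mul_sqNorm_le M v)

lemma eNorm_mulVec_le_sqrt_sigMaxSq_mul (v : C → ℝ) :
    eNorm (M *ᵥ v) ≤ Real.sqrt (sigMaxSq M) * eNorm v := by
  rw [eNorm, eNorm, ← Real.sqrt_mul' _ (sqNorm_nonneg v)]
  exact Real.sqrt_le_sqrt (sqNorm_mulVec_le_sigMaxSq_mul M v)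

end SingularValues

section Gram

variable {m l κ : Type*} [Fintype m] [Fintype l] [Fintype κ]

lemma dotProduct_transpose_mul_self_mulVec (B : Matrix m κ ℝ) (u v : κ → ℝ) :
    u ⬝ᵥ (Bᵀ * B) *ᵥ v = (B *ᵥ u) ⬝ᵥ (B *ᵥ v) := by
  rw [← mulVec_mulVec, dotProduct_mulVec, vecMul_transpose]

variable [DecidableEq κ]

lemma diag_eq_single_dotProduct_mulVec_single (D : Matrix κ κ ℝ) (i : κ) :
    D i i = Pi.single i 1 ⬝ᵥ D *ᵥ Pi.single i 1 := by
  rw [mulVec_single, single_dotProduct, one_mul]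
  simp

lemma isUnit_det_transpose_mul_self {B : Matrix m κ ℝ} (hB : Function.Injective B.mulVec) :
    IsUnit (Bᵀ * B).det := by
  have hker : LinearMap.ker (Bᵀ * B).mulVecLin = ⊥ := by
    rw [ker_mulVecLin_transpose_mul_self, LinearMap.ker_eq_bot]
    exact hB
  exact (isUnit_iff_isUnit_det _).1 (mulVec_injective_iff_isUnit.1 (LinearMap.ker_eq_bot.1 hker))

lemma transpose_mul_self_mulVec_inv_mulVec {B : Matrix m κ ℝ}
    (hB : Function.Injective B.mulVec) (v : κ → ℝ) : (Bᵀ * B) *ᵥ ((Bᵀ * B)⁻¹ *ᵥ v) = v := by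
  rw [mulVec_mulVec, mul_nonsing_inv _ (isUnit_det_transpose_mul_self hB), one_mulVec]

/-- Half of the variational formula `v ⬝ (BᵀB)⁻¹ v = max_w (2 v ⬝ w - ‖Bw‖²)`, whose maximum is
attained at `w = (BᵀB)⁻¹ v` (`dotProduct_inv_mulVec_eq`). -/
lemma two_mul_dotProduct_sub_sqNorm_le {B : Matrix m κ ℝ} (hB : Function.Injective B.mulVec)
    (v w : κ → ℝ) : 2 * (v ⬝ᵥ w) - sqNorm (B *ᵥ w) ≤ v ⬝ᵥ (Bᵀ * B)⁻¹ *ᵥ v := by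
  set q := (Bᵀ * B)⁻¹ *ᵥ v
  have hq := transpose_mul_self_mulVec_inv_mulVec hB v
  have hwq : (B *ᵥ w) ⬝ᵥ (B *ᵥ q) = v ⬝ᵥ w := by
    rw [← dotProduct_transpose_mul_self_mulVec, hq, dotProduct_comm]
  have hqq : sqNorm (B *ᵥ q) = v ⬝ᵥ q := by
    rw [sqNorm_eq_dotProduct, ← dotProduct_transpose_mul_self_mulVec, hq, dotProduct_comm]
  have := sqNorm_nonneg (B *ᵥ (w - q))
  rw [mulVec_sub, sqNorm_sub, hwq, hqq] at this
  linarith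

lemma dotProduct_inv_mulVec_eq {B : Matrix m κ ℝ} (hB : Function.Injective B.mulVec)
    (v : κ → ℝ) : v ⬝ᵥ (Bᵀ * B)⁻¹ *ᵥ v = sqNorm (B *ᵥ ((Bᵀ * B)⁻¹ *ᵥ v)) := by
  rw [sqNorm_eq_dotProduct, ← dotProduct_transpose_mul_self_mulVec,
    transpose_mul_self_mulVec_inv_mulVec hB, dotProduct_comm]

lemma dotProduct_inv_mulVec_le {B : Matrix m κ ℝ} {C : Matrix l κ ℝ}
    (hB : Function.Injective B.mulVec) (hC : Function.Injective C.mulVec) {c : ℝ} (hc : 0 < c)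
    (hBC : ∀ u, c * sqNorm (B *ᵥ u) ≤ sqNorm (C *ᵥ u)) (v : κ → ℝ) :
    v ⬝ᵥ (Cᵀ * C)⁻¹ *ᵥ v ≤ c⁻¹ * (v ⬝ᵥ (Bᵀ * B)⁻¹ *ᵥ v) := by
  set q := (Cᵀ * C)⁻¹ *ᵥ v
  have hq : v ⬝ᵥ q = sqNorm (C *ᵥ q) := dotProduct_inv_mulVec_eq hC v
  have hdual := two_mul_dotProduct_sub_sqNorm_le hB v (c • q)
  rw [mulVec_smul, sqNorm_smul, dotProduct_smul, smul_eq_mul] at hdual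
  rw [le_inv_mul_iff₀ hc]
  calc c * (v ⬝ᵥ q) = 2 * (c * (v ⬝ᵥ q)) - c * sqNorm (C *ᵥ q) := by rw [← hq]; ring
    _ ≤ 2 * (c * (v ⬝ᵥ q)) - c ^ 2 * sqNorm (B *ᵥ q) := by
        rw [sq, mul_assoc]
        exact sub_le_sub_left (mul_le_mul_of_nonneg_left (hBC q) hc.le) _
    _ ≤ v ⬝ᵥ (Bᵀ * B)⁻¹ *ᵥ v := hdual

lemma trace_inv_transpose_mul_self_le {B : Matrix m κ ℝ} {C : Matrix l κ ℝ}
    (hB : Function.Injective B.mulVec) {c : ℝ} (hc : 0 < c)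
    (hBC : ∀ u, c * sqNorm (B *ᵥ u) ≤ sqNorm (C *ᵥ u)) :
    ((Cᵀ * C)⁻¹).trace ≤ c⁻¹ * ((Bᵀ * B)⁻¹).trace := by
  have hC : Function.Injective C.mulVec := by
    intro u u' huu'
    have h := hBC (u - u')
    rw [mulVec_sub, mulVec_sub, huu', sub_self, sqNorm_eq_zero_iff.2 rfl] at h
    have h0 : sqNorm (B *ᵥ u - B *ᵥ u') = 0 :=
      le_antisymm (nonpos_of_mul_nonpos_right h hc) (sqNorm_nonneg _)
    rw [sqNorm_eq_zero_iff, sub_eq_zero] at h0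
    exact hB h0
  rw [trace, trace, Finset.mul_sum]
  refine Finset.sum_le_sum fun i _ => ?_
  rw [diag, diag, diag_eq_single_dotProduct_mulVec_single (Cᵀ * C)⁻¹,
    diag_eq_single_dotProduct_mulVec_single (Bᵀ * B)⁻¹]
  exact dotProduct_inv_mulVec_le hB hC hc hBC _

lemma trace_inv_transpose_mul_self_nonneg {B : Matrix m κ ℝ}
    (hB : Function.Injective B.mulVec) : 0 ≤ ((Bᵀ * B)⁻¹).trace := by
  refine Finset.sum_nonneg fun i _ => ?_
  rw [diag, diag_eq_single_dotProduct_mulVec_single (Bᵀ * B)⁻¹]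
  simpa [sqNorm] using two_mul_dotProduct_sub_sqNorm_le hB (Pi.single i 1) 0

end Gram

lemma mulVec_injective_of_rank_eq_card {m n K : Type*} [Fintype n] [Field K]
    {X : Matrix m n K} (h : X.rank = Fintype.card n) : Function.Injective X.mulVec := by
  have hker := LinearMap.finrank_range_add_finrank_ker X.mulVecLin
  rw [Module.finrank_fintype_fun_eq_card, ← rank, h, add_eq_left,
    Submodule.finrank_eq_zero, LinearMap.ker_eq_bot] at hker
  exact hker

theorem eNorm_sub_le_condNum_div_mul {n d k : ℕ} [Nonempty (Fin d)] {ε ρ : ℝ}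
    {X : Matrix (Fin n) (Fin d) ℝ} {Y : Fin n → ℝ} {P : Matrix (Fin k) (Fin n) ℝ}
    {γ ν : Fin d → ℝ} (hε : 0 ≤ ε) (hε' : ε ≤ 2) (hX : Function.Injective X.mulVec)
    (hP : IsSubspaceEmbedding P (augment X Y) (ε / 3)) (hγ : IsLeastSquaresSolution X Y γ)
    (hν : IsLeastSquaresSolution (P * X) (P *ᵥ Y) ν) (hρ : 0 < ρ)
    (hXγ : ρ * eNorm Y ≤ eNorm (X *ᵥ γ)) :
    eNorm (ν - γ) ≤ condNum X / ρ * ε * eNorm γ := by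
  have hmin : 0 < Real.sqrt (sigMinSq X) := Real.sqrt_pos.2 (sigMinSq_pos X hX)
  have hr : eNorm (Y - X *ᵥ γ) ≤ eNorm Y :=
    Real.sqrt_le_sqrt (by linarith [hγ.sqNorm_eq_add, sqNorm_nonneg (X *ᵥ γ)])
  have key : (1 - ε / 3) * (ρ * (Real.sqrt (sigMinSq X) * eNorm (ν - γ))) ≤
      ε / 3 * (Real.sqrt (sigMaxSq X) * eNorm γ) :=
    calc (1 - ε / 3) * (ρ * (Real.sqrt (sigMinSq X) * eNorm (ν - γ)))
        ≤ ρ * ((1 - ε / 3) * eNorm (X *ᵥ (ν - γ))) := by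
          rw [mul_left_comm]
          refine mul_le_mul_of_nonneg_left (mul_le_mul_of_nonneg_left ?_ (by linarith)) hρ.le
          exact sqrt_sigMinSq_mul_eNorm_le X (ν - γ)
      _ ≤ ρ * (ε / 3 * eNorm Y) := by
          refine mul_le_mul_of_nonneg_left ?_ hρ.le
          exact (hP.mul_eNorm_mulVec_sub_le (by positivity) hγ hν).trans
            (mul_le_mul_of_nonneg_left hr (by positivity))
      _ ≤ ε / 3 * (Real.sqrt (sigMaxSq X) * eNorm γ) := by
          rw [mul_left_comm]
          refine mul_le_mul_of_nonneg_left ?_ (by positivity)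
          exact hXγ.trans (eNorm_mulVec_le_sqrt_sigMaxSq_mul X γ)
  rw [condNum, div_div, div_mul_eq_mul_div, div_mul_eq_mul_div, le_div_iff₀ (by positivity)]
  have : 0 ≤ ρ * (Real.sqrt (sigMinSq X) * eNorm (ν - γ)) := by
    have := eNorm_nonneg (ν - γ); positivity
  nlinarith [mul_nonneg (by linarith : (0 : ℝ) ≤ 2 - ε) this]

lemma inv_one_sub_div_three_le_one_add_mul_sq {ε c : ℝ} (hε : 0 ≤ ε) (hε' : ε ≤ 2)
    (hc : 1 ≤ c) : (1 - ε / 3)⁻¹ ≤ (1 + c * ε) ^ 2 := by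
  rw [inv_le_iff_one_le_mul₀' (by linarith)]
  have hcε : 1 + ε ≤ 1 + c * ε := by nlinarith
  calc 1 ≤ (1 - ε / 3) * (1 + ε) := by nlinarith [mul_nonneg hε (by linarith : (0 : ℝ) ≤ 2 - ε)]
    _ ≤ (1 - ε / 3) * (1 + c * ε) ^ 2 := by
        gcongr
        · linarith
        · nlinarith

/-- The Wasserstein weight of the sketched likelihood distribution
`N(ν, (XᵀΠᵀΠX)⁻¹)` is at most `(1 + (κ(X)/ρ)·ε)` times the Wasserstein weight of the
original `N(γ, (XᵀX)⁻¹)`, where the weight of a Gaussian `N(m, Σ)` equals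
`(‖m‖² + trace Σ)^{1/2}`. -/
theorem wasserstein_weight_bound {n d k : ℕ} {ε : ℝ} (hε : 0 < ε) (hε' : ε ≤ 1 / 2)
    (X : Matrix (Fin n) (Fin d) ℝ) (hrank : X.rank = d) (Y : Fin n → ℝ)
    (P : Matrix (Fin k) (Fin n) ℝ)
    (hP : IsSubspaceEmbedding P (augment X Y) (ε / 3))
    (γ ν : Fin d → ℝ)
    (hγ : ∀ β : Fin d → ℝ, sqNorm (X.mulVec γ - Y) ≤ sqNorm (X.mulVec β - Y))
    (hν : ∀ β : Fin d → ℝ,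
      sqNorm (P.mulVec (X.mulVec ν - Y)) ≤ sqNorm (P.mulVec (X.mulVec β - Y)))
    (ρ : ℝ) (hρ₀ : 0 < ρ) (hρ₁ : ρ ≤ 1) (hXγ : eNorm (X.mulVec γ) ≥ ρ * eNorm Y) :
    Real.sqrt (sqNorm ν + ((Xᵀ * Pᵀ * P * X)⁻¹).trace) ≤
      (1 + condNum X / ρ * ε) * Real.sqrt (sqNorm γ + ((Xᵀ * X)⁻¹).trace) := by
  rcases isEmpty_or_nonempty (Fin d) with hd | hd
  · simp [sqNorm, trace]
  have hX := mulVec_injective_of_rank_eq_card (hrank.trans (Fintype.card_fin d).symm)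
  have hν' : IsLeastSquaresSolution (P * X) (P *ᵥ Y) ν := fun β => by
    simpa only [mulVec_sub, mulVec_mulVec] using hν β
  set c := condNum X / ρ
  have hc : 1 ≤ c := (one_le_div hρ₀).2 (hρ₁.trans (one_le_condNum X hX))
  have hmean : eNorm ν ≤ (1 + c * ε) * eNorm γ := by
    have := eNorm_sub_le_condNum_div_mul hε.le (by linarith) hX hP hγ hν' hρ₀ hXγ
    calc eNorm ν = eNorm (γ + (ν - γ)) := by rw [add_sub_cancel]
      _ ≤ eNorm γ + eNorm (ν - γ) := eNorm_add_le _ _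
      _ ≤ (1 + c * ε) * eNorm γ := by linarith
  have hPX : ∀ u, (1 - ε / 3) * sqNorm (X *ᵥ u) ≤ sqNorm ((P * X) *ᵥ u) := fun u => by
    simpa [augment_mulVec_snoc, ← mulVec_mulVec] using (hP (Fin.snoc u 0)).1
  have htrace := trace_inv_transpose_mul_self_le hX (by linarith) hPX
  have hfactor := inv_one_sub_div_three_le_one_add_mul_sq hε.le (by linarith) hc
  have hsq : sqNorm ν ≤ (1 + c * ε) ^ 2 * sqNorm γ := by
    rw [← eNorm_sq, ← eNorm_sq, ← mul_pow]
    exact pow_le_pow_left₀ (eNorm_nonneg ν) hmean 2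
  rw [show Xᵀ * Pᵀ * P * X = (P * X)ᵀ * (P * X) by rw [transpose_mul, Matrix.mul_assoc]]
  calc Real.sqrt (sqNorm ν + (((P * X)ᵀ * (P * X))⁻¹).trace)
      ≤ Real.sqrt ((1 + c * ε) ^ 2 * (sqNorm γ + ((Xᵀ * X)⁻¹).trace)) :=
        Real.sqrt_le_sqrt (by nlinarith [trace_inv_transpose_mul_self_nonneg hX])
    _ = (1 + c * ε) * Real.sqrt (sqNorm γ + ((Xᵀ * X)⁻¹).trace) := by
        rw [Real.sqrt_mul (sq_nonneg _), Real.sqrt_sq (by positivity)]
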